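/- arXiv:1711.05295 — 6 statements merged into one kernel-verified Lean document; each statement's English description precedes it below -/
import Mathlib

section
/- Let T̃ be a finite rooted tree with root r and leaf set M, and let κ: V(T̃) → ℝ satisfy: (1) normalisation ∑_{v≠r} κ_v² = 1, (2) κ_v = ∑_{c child of v} κ_c for all non-leaves v, and (3) for every vertex v and any two leaves m₀, m₁ in the subtree rooted at v, the sums of κ over the path from v to m₀ and from v to m₁ are equal. Then for all vertices v₀, v₁ of T̃, κ_{v₀} · κ_{v₁} > 0 (all values of κ have the same sign and none are zero). -/
open Finset

/-- A finite rooted tree, given by its root, the children relation, the subtree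
(vertex sets of subtrees rooted at each vertex), and root-to-descendant paths. -/
structure FinRootedTree (V : Type*) [Fintype V] [DecidableEq V] where
  root : V
  children : V → Finset V
  subtree : V → Finset V
  path : V → V → Finset V
  mem_subtree_self : ∀ v, v ∈ subtree v
  subtree_eq : ∀ v, subtree v = insert v ((children v).biUnion subtree)
  childSubtree_disjoint : ∀ v, (children v : Set V).PairwiseDisjoint subtree
  not_mem_child_subtree : ∀ v c, c ∈ children v → v ∉ subtree c
  path_self : ∀ v, path v v = {v}
  path_step : ∀ v c u, c ∈ children v → u ∈ subtree c → path v u = insert v (path c u)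
  path_subset : ∀ v u, u ∈ subtree v → path v u ⊆ subtree v
  root_subtree : subtree root = Finset.univ

variable {V : Type*} [Fintype V] [DecidableEq V]

/-- The set of leaves of the subtree rooted at `v`. -/
def FinRootedTree.leaves (t : FinRootedTree V) (v : V) : Finset V :=
  (t.subtree v).filter fun u => t.children u = ∅

/-- The effective resistance of the subtree rooted at `v`, in terms of `κ`. -/
noncomputable def FinRootedTree.resistance (t : FinRootedTree V) (κ : V → ℝ) (v : V) : ℝ :=
  (∑ u ∈ t.subtree v, κ u ^ 2) / κ v ^ 2 - 1

section Aux

lemma subtree_child_subset (t : FinRootedTree V) {v c : V} (hc : c ∈ t.children v) :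
    t.subtree c ⊆ t.subtree v := by
  rw [t.subtree_eq v]
  exact (Finset.subset_biUnion_of_mem _ hc).trans (Finset.subset_insert _ _)

lemma card_subtree_lt (t : FinRootedTree V) {v c : V} (hc : c ∈ t.children v) :
    (t.subtree c).card < (t.subtree v).card :=
  Finset.card_lt_card ⟨subtree_child_subset t hc,
    fun h => t.not_mem_child_subtree v c hc (h (t.mem_subtree_self v))⟩

lemma leaves_child_subset (t : FinRootedTree V) {v c : V} (hc : c ∈ t.children v) :
    t.leaves c ⊆ t.leaves v := by
  intro m hm
  simp only [FinRootedTree.leaves, Finset.mem_filter] at hm ⊢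
  exact ⟨subtree_child_subset t hc hm.1, hm.2⟩

lemma leaves_nonempty (t : FinRootedTree V) (v : V) : (t.leaves v).Nonempty := by
  by_cases h : t.children v = ∅
  · exact ⟨v, by simp [FinRootedTree.leaves, t.mem_subtree_self, h]⟩
  · obtain ⟨c, hc⟩ := Finset.nonempty_iff_ne_empty.2 h
    obtain ⟨m, hm⟩ := leaves_nonempty t c
    exact ⟨m, leaves_child_subset t hc hm⟩
termination_by (t.subtree v).card
decreasing_by exact card_subtree_lt t hc

lemma not_mem_biUnion_subtree (t : FinRootedTree V) (v : V) :
    v ∉ (t.children v).biUnion t.subtree := by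
  simp only [Finset.mem_biUnion, not_exists]
  exact fun c hc => t.not_mem_child_subtree v c hc.1 hc.2

lemma not_mem_path_child (t : FinRootedTree V) {v c u : V} (hc : c ∈ t.children v)
    (hu : u ∈ t.subtree c) : v ∉ t.path c u :=
  fun h => t.not_mem_child_subtree v c hc (t.path_subset c u hu h)

lemma path_sum_step (t : FinRootedTree V) (κ : V → ℝ) {v c u : V} (hc : c ∈ t.children v)
    (hu : u ∈ t.subtree c) :
    ∑ w ∈ t.path v u, κ w = κ v + ∑ w ∈ t.path c u, κ w := by
  rw [t.path_step v c u hc hu, Finset.sum_insert (not_mem_path_child t hc hu)]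

lemma leaf_mem_child (t : FinRootedTree V) {v m : V} (hm : m ∈ t.leaves v)
    (hne : t.children v ≠ ∅) : ∃ c ∈ t.children v, m ∈ t.leaves c := by
  simp only [FinRootedTree.leaves, Finset.mem_filter] at hm
  have hmv : m ≠ v := fun h => hne (h ▸ hm.2)
  have h1 := hm.1
  rw [t.subtree_eq v, Finset.mem_insert] at h1
  rcases h1 with h1 | h1
  · exact absurd h1 hmv
  · obtain ⟨c, hc, hmc⟩ := Finset.mem_biUnion.1 h1
    exact ⟨c, hc, Finset.mem_filter.2 ⟨hmc, hm.2⟩⟩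

lemma sum_sq_eq (t : FinRootedTree V) (κ : V → ℝ)
    (hrec : ∀ v, t.children v ≠ ∅ → κ v = ∑ c ∈ t.children v, κ c)
    (hpath : ∀ v, ∀ m₀ ∈ t.leaves v, ∀ m₁ ∈ t.leaves v,
      ∑ u ∈ t.path v m₀, κ u = ∑ u ∈ t.path v m₁, κ u)
    (v : V) : ∀ m ∈ t.leaves v,
    ∑ u ∈ t.subtree v, κ u ^ 2 = κ v * ∑ u ∈ t.path v m, κ u := by
  intro m hm
  by_cases h : t.children v = ∅
  · have hmv : m = v := by
      have h1 := (Finset.mem_filter.1 hm).1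
      rw [t.subtree_eq v, h] at h1
      simpa using h1
    subst hmv
    rw [t.path_self m, t.subtree_eq m, h]
    simp [sq]
  · have hsplit : ∑ u ∈ t.subtree v, κ u ^ 2
        = κ v ^ 2 + ∑ c ∈ t.children v, ∑ u ∈ t.subtree c, κ u ^ 2 := by
      rw [t.subtree_eq v, Finset.sum_insert (not_mem_biUnion_subtree t v),
        Finset.sum_biUnion (t.childSubtree_disjoint v)]
    obtain ⟨c₀, hc₀, hmc₀⟩ := leaf_mem_child t hm h
    set s : ℝ := ∑ u ∈ t.path c₀ m, κ u with hs
    have hchild : ∀ c ∈ t.children v, ∑ u ∈ t.subtree c, κ u ^ 2 = κ c * s := by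
      intro c hc
      obtain ⟨mc, hmc⟩ := leaves_nonempty t c
      have hIH := sum_sq_eq t κ hrec hpath c mc hmc
      have heq : ∑ u ∈ t.path v m, κ u = ∑ u ∈ t.path v mc, κ u :=
        hpath v m hm mc (leaves_child_subset t hc hmc)
      rw [path_sum_step t κ hc₀ (Finset.mem_filter.1 hmc₀).1,
        path_sum_step t κ hc (Finset.mem_filter.1 hmc).1] at heq
      rw [hIH, (by linarith : ∑ u ∈ t.path c mc, κ u = s)]
    rw [hsplit, Finset.sum_congr rfl hchild, ← Finset.sum_mul, ← hrec v h,
      path_sum_step t κ hc₀ (Finset.mem_filter.1 hmc₀).1]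
    ring
termination_by (t.subtree v).card
decreasing_by exact card_subtree_lt t hc

lemma sign_prop (t : FinRootedTree V) (κ : V → ℝ)
    (hrec : ∀ v, t.children v ≠ ∅ → κ v = ∑ c ∈ t.children v, κ c)
    (hpath : ∀ v, ∀ m₀ ∈ t.leaves v, ∀ m₁ ∈ t.leaves v,
      ∑ u ∈ t.path v m₀, κ u = ∑ u ∈ t.path v m₁, κ u)
    (v : V) : κ v ≠ 0 → ∀ u ∈ t.subtree v, κ u * κ v > 0 := by
  intro hkv u hu
  by_cases h : t.children v = ∅
  · have huv : u = v := by
      rw [t.subtree_eq v, h] at hu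
      simpa using hu
    subst huv
    exact mul_self_pos.2 hkv
  · obtain ⟨c₀, hc₀⟩ := Finset.nonempty_iff_ne_empty.2 h
    obtain ⟨m₀, hm₀⟩ := leaves_nonempty t c₀
    set s : ℝ := ∑ w ∈ t.path c₀ m₀, κ w with hs
    have hchild : ∀ c ∈ t.children v, ∑ w ∈ t.subtree c, κ w ^ 2 = κ c * s := by
      intro c hc
      obtain ⟨mc, hmc⟩ := leaves_nonempty t c
      have hIH := sum_sq_eq t κ hrec hpath c mc hmc
      have heq := hpath v mc (leaves_child_subset t hc hmc) m₀
        (leaves_child_subset t hc₀ hm₀)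
      rw [path_sum_step t κ hc (Finset.mem_filter.1 hmc).1,
        path_sum_step t κ hc₀ (Finset.mem_filter.1 hm₀).1] at heq
      rw [hIH, (by linarith : ∑ w ∈ t.path c mc, κ w = s)]
    have hcnz : ∀ c ∈ t.children v, κ c ≠ 0 := by
      intro c hc hc0
      have hzero : ∀ w ∈ t.subtree c, κ w = 0 := by
        have h0 : ∑ w ∈ t.subtree c, κ w ^ 2 = 0 := by rw [hchild c hc, hc0, zero_mul]
        intro w hw
        have h1 := (Finset.sum_eq_zero_iff_of_nonneg (fun i _ => sq_nonneg (κ i))).1 h0 w hw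
        exact pow_eq_zero_iff (n := 2) (by norm_num) |>.1 h1
      have hs0 : s = 0 := by
        obtain ⟨mc, hmc⟩ := leaves_nonempty t c
        have heq := hpath v mc (leaves_child_subset t hc hmc) m₀
          (leaves_child_subset t hc₀ hm₀)
        rw [path_sum_step t κ hc (Finset.mem_filter.1 hmc).1,
          path_sum_step t κ hc₀ (Finset.mem_filter.1 hm₀).1] at heq
        have h1 : ∑ w ∈ t.path c mc, κ w = 0 :=
          Finset.sum_eq_zero fun w hw =>
            hzero w (t.path_subset c mc (Finset.mem_filter.1 hmc).1 hw)
        linarith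
      have hall0 : ∀ d ∈ t.children v, κ d = 0 := by
        intro d hd
        have h0 : ∑ w ∈ t.subtree d, κ w ^ 2 = 0 := by rw [hchild d hd, hs0, mul_zero]
        have h1 := (Finset.sum_eq_zero_iff_of_nonneg (fun i _ => sq_nonneg (κ i))).1 h0 d
          (t.mem_subtree_self d)
        exact pow_eq_zero_iff (n := 2) (by norm_num) |>.1 h1
      exact hkv (by rw [hrec v h, Finset.sum_eq_zero hall0])
    have hcs : ∀ c ∈ t.children v, κ c * s > 0 := by
      intro c hc
      have h1 : κ c ^ 2 ≤ ∑ w ∈ t.subtree c, κ w ^ 2 :=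
        Finset.single_le_sum (fun i _ => sq_nonneg (κ i)) (t.mem_subtree_self c)
      have h2 : (0:ℝ) < κ c ^ 2 := pow_two_pos_of_ne_zero (hcnz c hc)
      rw [hchild c hc] at h1
      linarith
    have hvs : κ v * s > 0 := by
      rw [hrec v h, Finset.sum_mul]
      exact Finset.sum_pos hcs ⟨c₀, hc₀⟩
    rw [t.subtree_eq v, Finset.mem_insert] at hu
    rcases hu with rfl | hu
    · exact mul_self_pos.2 hkv
    · obtain ⟨c, hc, huc⟩ := Finset.mem_biUnion.1 hu
      have hIH := sign_prop t κ hrec hpath c (hcnz c hc) u huc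
      have h3 := hcs c hc
      nlinarith [mul_pos hIH hvs]
termination_by (t.subtree v).card
decreasing_by exact card_subtree_lt t hc

end Aux

theorem kappa_same_sign (t : FinRootedTree V) (κ : V → ℝ)
    (hnorm : ∑ v ∈ Finset.univ.erase t.root, κ v ^ 2 = 1)
    (hrec : ∀ v, t.children v ≠ ∅ → κ v = ∑ c ∈ t.children v, κ c)
    (hpath : ∀ v, ∀ m₀ ∈ t.leaves v, ∀ m₁ ∈ t.leaves v,
      ∑ u ∈ t.path v m₀, κ u = ∑ u ∈ t.path v m₁, κ u)
    : ∀ v₀ v₁ : V, κ v₀ * κ v₁ > 0 := by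
  have hroot : κ t.root ≠ 0 := by
    intro h0
    obtain ⟨m, hm⟩ := leaves_nonempty t t.root
    have h1 := sum_sq_eq t κ hrec hpath t.root m hm
    rw [t.root_subtree, h0, zero_mul] at h1
    have h2 : ∑ v ∈ (Finset.univ : Finset V), κ v ^ 2
        = κ t.root ^ 2 + ∑ v ∈ Finset.univ.erase t.root, κ v ^ 2 :=
      (Finset.add_sum_erase _ _ (Finset.mem_univ _)).symm
    rw [h1, hnorm, h0] at h2
    norm_num at h2
  intro v₀ v₁
  have h0 : κ v₀ * κ t.root > 0 :=
    sign_prop t κ hrec hpath t.root hroot v₀ (by rw [t.root_subtree]; exact Finset.mem_univ _)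
  have h1 : κ v₁ * κ t.root > 0 :=
    sign_prop t κ hrec hpath t.root hroot v₁ (by rw [t.root_subtree]; exact Finset.mem_univ _)
  nlinarith [mul_pos h0 h1, pow_two_pos_of_ne_zero hroot]
end

section
/- Let T̃ be a finite rooted tree with root r and leaf set M, and κ: V(T̃) → ℝ satisfying the recurrence κ_v = ∑_{c child of v} κ_c for non-leaves v and the path-sum condition: for every v and all leaves m₀, m₁ in the subtree rooted at v, ∑_{u ∈ P(v,m₀)} κ_u = ∑_{u ∈ P(v,m₁)} κ_u. Then for every vertex v and any leaf m in the subtree rooted at v, κ_v · ∑_{u ∈ P(v,m)} κ_u = ∑_{u ∈ T̃(v)} κ_u². -/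
open Finset

variable {V : Type*} [Fintype V] [DecidableEq V]

theorem kappa_path_identity (t : FinRootedTree V) (κ : V → ℝ)
    (hrec : ∀ v, t.children v ≠ ∅ → κ v = ∑ c ∈ t.children v, κ c)
    (hpath : ∀ v, ∀ m₀ ∈ t.leaves v, ∀ m₁ ∈ t.leaves v,
      ∑ u ∈ t.path v m₀, κ u = ∑ u ∈ t.path v m₁, κ u)
    : ∀ v, ∀ m ∈ t.leaves v,
      κ v * ∑ u ∈ t.path v m, κ u = ∑ u ∈ t.subtree v, κ u ^ 2 := by

  -- auxiliary facts
  have hsub : ∀ v c, c ∈ t.children v → t.subtree c ⊆ t.subtree v := by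
    intro v c hc
    rw [t.subtree_eq v]
    exact (Finset.subset_biUnion_of_mem _ hc).trans (Finset.subset_insert _ _)
  have hcard : ∀ v c, c ∈ t.children v → (t.subtree c).card < (t.subtree v).card := by
    intro v c hc
    exact Finset.card_lt_card (Finset.ssubset_iff_of_subset (hsub v c hc) |>.2
      ⟨v, t.mem_subtree_self v, t.not_mem_child_subtree v c hc⟩)
  have hleafmem : ∀ v c, c ∈ t.children v → ∀ m ∈ t.leaves c, m ∈ t.leaves v := by
    intro v c hc m hm
    simp only [FinRootedTree.leaves, Finset.mem_filter] at hm ⊢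
    exact ⟨hsub v c hc hm.1, hm.2⟩
  have hleaf : ∀ v, ∃ m, m ∈ t.leaves v := by
    have : ∀ n v, (t.subtree v).card = n → ∃ m, m ∈ t.leaves v := by
      intro n
      induction n using Nat.strong_induction_on with
      | _ n ih =>
        intro v hn
        by_cases h : t.children v = ∅
        · exact ⟨v, by simp [FinRootedTree.leaves, t.mem_subtree_self, h]⟩
        · obtain ⟨c, hc⟩ := Finset.nonempty_iff_ne_empty.2 h
          obtain ⟨m, hm⟩ := ih _ (hn ▸ hcard v c hc) c rfl
          exact ⟨m, hleafmem v c hc m hm⟩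
    intro v; exact this _ v rfl
  have main : ∀ n v, (t.subtree v).card = n → ∀ m ∈ t.leaves v,
      κ v * ∑ u ∈ t.path v m, κ u = ∑ u ∈ t.subtree v, κ u ^ 2 := by
    intro n
    induction n using Nat.strong_induction_on with
    | _ n ih =>
      intro v hn m hm
      simp only [FinRootedTree.leaves, Finset.mem_filter] at hm
      by_cases h : t.children v = ∅
      · have hmv : m = v := by
          have := hm.1
          rw [t.subtree_eq v, h] at this
          simpa using this
        subst hmv
        rw [t.path_self m, t.subtree_eq m, h]
        simp [sq]
      · -- m ≠ v since m is a leaf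
        have hmv : m ≠ v := by rintro rfl; exact h hm.2
        have hmB : m ∈ (t.children v).biUnion t.subtree := by
          have := hm.1
          rw [t.subtree_eq v] at this
          rcases Finset.mem_insert.1 this with h' | h'
          · exact absurd h' hmv
          · exact h'
        obtain ⟨c₀, hc₀, hmc₀⟩ := Finset.mem_biUnion.1 hmB
        have hmleafc₀ : m ∈ t.leaves c₀ := by
          simp only [FinRootedTree.leaves, Finset.mem_filter]
          exact ⟨hmc₀, hm.2⟩
        -- path sum from v
        have hpathv : t.path v m = insert v (t.path c₀ m) := t.path_step v c₀ m hc₀ hmc₀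
        have hvnot : v ∉ t.path c₀ m :=
          fun hv => t.not_mem_child_subtree v c₀ hc₀ (t.path_subset c₀ m hmc₀ hv)
        set S := ∑ u ∈ t.path c₀ m, κ u with hS
        -- subtree sum decomposition
        have hvnotB : v ∉ (t.children v).biUnion t.subtree := by
          intro hv
          obtain ⟨c, hc, hvc⟩ := Finset.mem_biUnion.1 hv
          exact t.not_mem_child_subtree v c hc hvc
        have hsumdec : ∑ u ∈ t.subtree v, κ u ^ 2
            = κ v ^ 2 + ∑ c ∈ t.children v, ∑ u ∈ t.subtree c, κ u ^ 2 := by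
          rw [t.subtree_eq v, Finset.sum_insert hvnotB,
            Finset.sum_biUnion (t.childSubtree_disjoint v)]
        -- for each child c, its subtree sum is κ c * S
        have hchild : ∀ c ∈ t.children v, ∑ u ∈ t.subtree c, κ u ^ 2 = κ c * S := by
          intro c hc
          obtain ⟨mc, hmc⟩ := hleaf c
          have hih := ih _ (hn ▸ hcard v c hc) c rfl mc hmc
          have heq : ∑ u ∈ t.path c mc, κ u = S := by
            have h1 := hpath v mc (hleafmem v c hc mc hmc) m (by
              simp only [FinRootedTree.leaves, Finset.mem_filter]; exact hm)
            have hmcsub : mc ∈ t.subtree c := by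
              simp only [FinRootedTree.leaves, Finset.mem_filter] at hmc
              exact hmc.1
            rw [t.path_step v c mc hc hmcsub, hpathv,
              Finset.sum_insert (fun hv => t.not_mem_child_subtree v c hc
                (t.path_subset c mc hmcsub hv)),
              Finset.sum_insert hvnot] at h1
            linarith
          rw [← hih, heq]
        rw [hsumdec, Finset.sum_congr rfl hchild, ← Finset.sum_mul, ← hrec v h,
          hpathv, Finset.sum_insert hvnot]
        ring
  intro v m hm
  exact main _ v rfl m hm
end

section
/- Let T̃ be a finite rooted tree with κ: V(T̃) → ℝ satisfying the children-sum recurrence and path-sum condition, with all κ_v > 0. Define η̄(v) = (∑_{u ∈ T̃(v)} κ_u²) / κ_v² − 1 for each vertex v. Then η̄ satisfies the series-parallel resistance recurrence: for every non-leaf vertex v, 1/η̄(v) = ∑_{c child of v} 1/(η̄(c) + 1), and η̄(m) = 0 for every leaf m. -/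
open Finset

variable {V : Type*} [Fintype V] [DecidableEq V]

namespace FinRootedTree

lemma child_subtree_subset (t : FinRootedTree V) {v c : V} (hc : c ∈ t.children v) :
    t.subtree c ⊆ t.subtree v := by
  rw [t.subtree_eq v]
  exact (Finset.subset_biUnion_of_mem _ hc).trans (Finset.subset_insert _ _)

lemma child_card_lt (t : FinRootedTree V) {v c : V} (hc : c ∈ t.children v) :
    (t.subtree c).card < (t.subtree v).card :=
  Finset.card_lt_card ⟨t.child_subtree_subset hc,
    fun h => t.not_mem_child_subtree v c hc (h (t.mem_subtree_self v))⟩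

lemma leaf_mem_leaves (t : FinRootedTree V) {v c m : V} (hc : c ∈ t.children v)
    (hm : m ∈ t.leaves c) : m ∈ t.leaves v := by
  simp only [leaves, mem_filter] at *
  exact ⟨t.child_subtree_subset hc hm.1, hm.2⟩

lemma sum_subtree (t : FinRootedTree V) (f : V → ℝ) (v : V) :
    ∑ u ∈ t.subtree v, f u = f v + ∑ c ∈ t.children v, ∑ u ∈ t.subtree c, f u := by
  rw [t.subtree_eq v, Finset.sum_insert, Finset.sum_biUnion (t.childSubtree_disjoint v)]
  simp only [Finset.mem_biUnion, not_exists, not_and]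
  intro c hc
  exact t.not_mem_child_subtree v c hc

lemma subtree_of_leaf (t : FinRootedTree V) {v : V} (h : t.children v = ∅) :
    t.subtree v = {v} := by
  rw [t.subtree_eq v, h]
  simp

lemma key (t : FinRootedTree V) (κ : V → ℝ)
    (hrec : ∀ v, t.children v ≠ ∅ → κ v = ∑ c ∈ t.children v, κ c)
    (hpath : ∀ v, ∀ m₀ ∈ t.leaves v, ∀ m₁ ∈ t.leaves v,
      ∑ u ∈ t.path v m₀, κ u = ∑ u ∈ t.path v m₁, κ u)
    (v : V) :
    (t.leaves v).Nonempty ∧ ∀ m ∈ t.leaves v,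
      ∑ u ∈ t.subtree v, κ u ^ 2 = κ v * ∑ u ∈ t.path v m, κ u := by
  have H : ∀ n : ℕ, ∀ v : V, (t.subtree v).card ≤ n →
      (t.leaves v).Nonempty ∧ ∀ m ∈ t.leaves v,
      ∑ u ∈ t.subtree v, κ u ^ 2 = κ v * ∑ u ∈ t.path v m, κ u := by
    intro n
    induction n with
    | zero =>
      intro v hv
      exact absurd (Finset.card_pos.mpr ⟨v, t.mem_subtree_self v⟩) (by omega)
    | succ n ih =>
      intro v hv
      by_cases hleaf : t.children v = ∅
      · have hsub : t.subtree v = {v} := t.subtree_of_leaf hleaf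
        have hl : t.leaves v = {v} := by
          rw [leaves, hsub, Finset.filter_singleton, if_pos hleaf]
        refine ⟨by rw [hl]; exact ⟨v, mem_singleton_self v⟩, ?_⟩
        intro m hm
        rw [hl, mem_singleton] at hm
        subst hm
        rw [hsub, t.path_self, Finset.sum_singleton, Finset.sum_singleton]
        ring
      · -- nonleaf
        have ihc : ∀ c ∈ t.children v, (t.leaves c).Nonempty ∧ ∀ m ∈ t.leaves c,
            ∑ u ∈ t.subtree c, κ u ^ 2 = κ c * ∑ u ∈ t.path c m, κ u := by
          intro c hc
          exact ih c (by have := t.child_card_lt hc; omega)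
        obtain ⟨c₀, hc₀⟩ := Finset.nonempty_iff_ne_empty.mpr hleaf
        obtain ⟨m₀, hm₀⟩ := (ihc c₀ hc₀).1
        have hm₀v : m₀ ∈ t.leaves v := t.leaf_mem_leaves hc₀ hm₀
        refine ⟨⟨m₀, hm₀v⟩, ?_⟩
        intro m hm
        -- path sums from children are all `∑ path v m - κ v`
        have hQ : ∀ c ∈ t.children v, ∀ m' ∈ t.leaves c,
            ∑ u ∈ t.path c m', κ u = (∑ u ∈ t.path v m, κ u) - κ v := by
          intro c hc m' hm'
          have hm's : m' ∈ t.subtree c := (Finset.mem_filter.mp hm').1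
          have hstep : t.path v m' = insert v (t.path c m') := t.path_step v c m' hc hm's
          have hvnot : v ∉ t.path c m' := fun h =>
            t.not_mem_child_subtree v c hc (t.path_subset c m' hm's h)
          have h1 : ∑ u ∈ t.path v m', κ u = κ v + ∑ u ∈ t.path c m', κ u := by
            rw [hstep, Finset.sum_insert hvnot]
          have h2 : ∑ u ∈ t.path v m', κ u = ∑ u ∈ t.path v m, κ u :=
            hpath v m' (t.leaf_mem_leaves hc hm') m hm
          linarith
        have hsum : ∑ u ∈ t.subtree v, κ u ^ 2
            = κ v ^ 2 + ∑ c ∈ t.children v, ∑ u ∈ t.subtree c, κ u ^ 2 :=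
          t.sum_subtree (fun u => κ u ^ 2) v
        have hchild : ∀ c ∈ t.children v, ∑ u ∈ t.subtree c, κ u ^ 2
            = κ c * ((∑ u ∈ t.path v m, κ u) - κ v) := by
          intro c hc
          obtain ⟨mc, hmc⟩ := (ihc c hc).1
          rw [(ihc c hc).2 mc hmc, hQ c hc mc hmc]
        rw [hsum, Finset.sum_congr rfl hchild, ← Finset.sum_mul, ← hrec v hleaf]
        ring
  exact H _ v le_rfl

lemma subtree_sq_pos (t : FinRootedTree V) (κ : V → ℝ) (hpos : ∀ v, 0 < κ v) (v : V) :
    0 < ∑ u ∈ t.subtree v, κ u ^ 2 := by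
  have h1 : κ v ^ 2 ≤ ∑ u ∈ t.subtree v, κ u ^ 2 :=
    Finset.single_le_sum (fun u _ => sq_nonneg (κ u)) (t.mem_subtree_self v)
  have := hpos v
  nlinarith

end FinRootedTree

theorem resistance_recurrence (t : FinRootedTree V) (κ : V → ℝ)
    (hrec : ∀ v, t.children v ≠ ∅ → κ v = ∑ c ∈ t.children v, κ c)
    (hpath : ∀ v, ∀ m₀ ∈ t.leaves v, ∀ m₁ ∈ t.leaves v,
      ∑ u ∈ t.path v m₀, κ u = ∑ u ∈ t.path v m₁, κ u)
    (hpos : ∀ v, 0 < κ v)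
    : (∀ m, t.children m = ∅ → t.resistance κ m = 0) ∧
      (∀ v, t.children v ≠ ∅ →
        1 / t.resistance κ v = ∑ c ∈ t.children v, 1 / (t.resistance κ c + 1)) := by
  constructor
  · intro m hm
    rw [FinRootedTree.resistance, t.subtree_of_leaf hm]
    rw [Finset.sum_singleton, div_self (by have := hpos m; positivity)]
    ring
  · intro v hv
    obtain ⟨⟨m, hm⟩, hS⟩ := t.key κ hrec hpath v
    set P : ℝ := ∑ u ∈ t.path v m, κ u with hP
    -- m is in some child subtree
    have hmv : m ≠ v := by
      intro h; subst h
      exact hv (Finset.mem_filter.mp hm).2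
    have hms : m ∈ t.subtree v := (Finset.mem_filter.mp hm).1
    rw [t.subtree_eq v, Finset.mem_insert] at hms
    rcases hms with h | hms
    · exact absurd h hmv
    obtain ⟨c₁, hc₁, hmc₁⟩ := Finset.mem_biUnion.mp hms
    have hmlc₁ : m ∈ t.leaves c₁ :=
      Finset.mem_filter.mpr ⟨hmc₁, (Finset.mem_filter.mp hm).2⟩
    -- Q = P - κ v > 0
    have hQc₁ : ∑ u ∈ t.path c₁ m, κ u = P - κ v := by
      have hstep := t.path_step v c₁ m hc₁ hmc₁
      have hvnot : v ∉ t.path c₁ m := fun h =>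
        t.not_mem_child_subtree v c₁ hc₁ (t.path_subset c₁ m hmc₁ h)
      have : P = κ v + ∑ u ∈ t.path c₁ m, κ u := by
        rw [hP, hstep, Finset.sum_insert hvnot]
      linarith
    have hSc₁ := (t.key κ hrec hpath c₁).2 m hmlc₁
    have hQpos : 0 < P - κ v := by
      have h0 := t.subtree_sq_pos κ hpos c₁
      rw [hSc₁, hQc₁] at h0
      have := hpos c₁
      nlinarith
    -- resistance v = (P - κ v)/ κ v
    have hresv : t.resistance κ v = (P - κ v) / κ v := by
      rw [FinRootedTree.resistance, hS m hm, ← hP]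
      have h := (hpos v).ne'
      field_simp
    -- resistance c + 1 = (P - κ v)/κ c for each child
    have hresc : ∀ c ∈ t.children v, t.resistance κ c + 1 = (P - κ v) / κ c := by
      intro c hc
      obtain ⟨⟨mc, hmc⟩, hSc⟩ := t.key κ hrec hpath c
      have hQmc : ∑ u ∈ t.path c mc, κ u = P - κ v := by
        have hmcs : mc ∈ t.subtree c := (Finset.mem_filter.mp hmc).1
        have hstep := t.path_step v c mc hc hmcs
        have hvnot : v ∉ t.path c mc := fun h =>
          t.not_mem_child_subtree v c hc (t.path_subset c mc hmcs h)
        have h1 : ∑ u ∈ t.path v mc, κ u = κ v + ∑ u ∈ t.path c mc, κ u := by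
          rw [hstep, Finset.sum_insert hvnot]
        have h2 : ∑ u ∈ t.path v mc, κ u = P :=
          hpath v mc (t.leaf_mem_leaves hc hmc) m hm
        linarith
      rw [FinRootedTree.resistance, hSc mc hmc, hQmc]
      have h := (hpos c).ne'
      field_simp
      ring
    rw [hresv, Finset.sum_congr rfl (fun c hc => by rw [hresc c hc]),
      one_div_div]
    have : ∑ c ∈ t.children v, 1 / ((P - κ v) / κ c)
        = ∑ c ∈ t.children v, κ c / (P - κ v) :=
      Finset.sum_congr rfl fun c _ => one_div_div _ _
    rw [this, ← Finset.sum_div, ← hrec v hv]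
end

section
/- Let T̃ be a finite rooted tree with κ: V(T̃) → ℝ positive, satisfying the children-sum recurrence and path-sum condition, and define η̄(v) = (∑_{u ∈ T̃(v)} κ_u²)/κ_v² − 1. Then for any non-leaf vertex v and any child c of v, (η̄(c) + 1)/η̄(v) = κ_v/κ_c. -/
open Finset

variable {V : Type*} [Fintype V] [DecidableEq V]

namespace FinRootedTree

variable (t : FinRootedTree V)

lemma subtree_child_subset {v c : V} (hc : c ∈ t.children v) :
    t.subtree c ⊆ t.subtree v := by
  intro x hx
  rw [t.subtree_eq v]
  exact Finset.mem_insert_of_mem (Finset.mem_biUnion.2 ⟨c, hc, hx⟩)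

lemma card_child_lt {v c : V} (hc : c ∈ t.children v) :
    (t.subtree c).card < (t.subtree v).card :=
  Finset.card_lt_card ⟨t.subtree_child_subset hc,
    fun h => t.not_mem_child_subtree v c hc (h (t.mem_subtree_self v))⟩

lemma exists_leaf : ∀ n (v : V), (t.subtree v).card ≤ n → ∃ m, m ∈ t.leaves v := by
  intro n
  induction n with
  | zero =>
    intro v h
    exact absurd (Finset.card_pos.2 ⟨v, t.mem_subtree_self v⟩) (by omega)
  | succ n ih =>
    intro v h
    by_cases hv : t.children v = ∅
    · exact ⟨v, Finset.mem_filter.2 (by exact ⟨t.mem_subtree_self v, hv⟩)⟩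
    · obtain ⟨c, hc⟩ := Finset.nonempty_iff_ne_empty.2 hv
      obtain ⟨m, hm⟩ := ih c (by have := t.card_child_lt hc; omega)
      rw [FinRootedTree.leaves, Finset.mem_filter] at hm
      exact ⟨m, Finset.mem_filter.2 ⟨t.subtree_child_subset hc hm.1, hm.2⟩⟩

lemma leaves_child_subset {v c : V} (hc : c ∈ t.children v) :
    t.leaves c ⊆ t.leaves v := by
  intro m hm
  rw [FinRootedTree.leaves, Finset.mem_filter] at hm ⊢
  exact ⟨t.subtree_child_subset hc hm.1, hm.2⟩

lemma path_sum_step (κ : V → ℝ) {v c m : V} (hc : c ∈ t.children v)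
    (hm : m ∈ t.subtree c) :
    ∑ u ∈ t.path v m, κ u = κ v + ∑ u ∈ t.path c m, κ u := by
  rw [t.path_step v c m hc hm, Finset.sum_insert]
  exact fun h => t.not_mem_child_subtree v c hc (t.path_subset c m hm h)

lemma sum_sq_eq (κ : V → ℝ)
    (hrec : ∀ v, t.children v ≠ ∅ → κ v = ∑ c ∈ t.children v, κ c)
    (hpath : ∀ v, ∀ m₀ ∈ t.leaves v, ∀ m₁ ∈ t.leaves v,
      ∑ u ∈ t.path v m₀, κ u = ∑ u ∈ t.path v m₁, κ u) :
    ∀ n (v : V), (t.subtree v).card ≤ n → ∀ m ∈ t.leaves v,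
      ∑ u ∈ t.subtree v, κ u ^ 2 = κ v * ∑ u ∈ t.path v m, κ u := by
  intro n
  induction n with
  | zero =>
    intro v h
    exact absurd (Finset.card_pos.2 ⟨v, t.mem_subtree_self v⟩) (by omega)
  | succ n ih =>
    intro v h m hm
    by_cases hv : t.children v = ∅
    · have hs : t.subtree v = {v} := by rw [t.subtree_eq v, hv]; simp
      have hmv : m = v := by
        have := (Finset.mem_filter.1 hm).1
        rw [hs] at this
        simpa using this
      subst hmv
      rw [hs, t.path_self]
      simp [sq]
    · have hsum : ∑ u ∈ t.subtree v, κ u ^ 2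
          = κ v ^ 2 + ∑ c ∈ t.children v, ∑ u ∈ t.subtree c, κ u ^ 2 := by
        rw [t.subtree_eq v, Finset.sum_insert, Finset.sum_biUnion (t.childSubtree_disjoint v)]
        intro h'
        obtain ⟨c, hc, hvc⟩ := Finset.mem_biUnion.1 h'
        exact t.not_mem_child_subtree v c hc hvc
      have hchild : ∀ c ∈ t.children v, ∑ u ∈ t.subtree c, κ u ^ 2
          = κ c * (∑ u ∈ t.path v m, κ u - κ v) := by
        intro c hc
        obtain ⟨mc, hmc⟩ := t.exists_leaf (t.subtree c).card c le_rfl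
        have h1 := ih c (by have := t.card_child_lt hc; omega) mc hmc
        have h2 := t.path_sum_step κ hc (Finset.mem_filter.1 hmc).1
        have h3 := hpath v mc (t.leaves_child_subset hc hmc) m hm
        have h4 : ∑ u ∈ t.path c mc, κ u = ∑ u ∈ t.path v m, κ u - κ v := by
          rw [← h3]; linarith
        rw [h1, h4]
      rw [hsum, Finset.sum_congr rfl hchild, ← Finset.sum_mul, ← hrec v hv]
      ring

lemma mem_path_self {v m : V} (hm : m ∈ t.subtree v) : v ∈ t.path v m := by
  rw [t.subtree_eq v] at hm
  rcases Finset.mem_insert.1 hm with h | h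
  · subst h; rw [t.path_self]; exact Finset.mem_singleton_self _
  · obtain ⟨c, hc, hmc⟩ := Finset.mem_biUnion.1 h
    rw [t.path_step v c m hc hmc]
    exact Finset.mem_insert_self _ _

end FinRootedTree

theorem resistance_ratio (t : FinRootedTree V) (κ : V → ℝ)
    (hrec : ∀ v, t.children v ≠ ∅ → κ v = ∑ c ∈ t.children v, κ c)
    (hpath : ∀ v, ∀ m₀ ∈ t.leaves v, ∀ m₁ ∈ t.leaves v,
      ∑ u ∈ t.path v m₀, κ u = ∑ u ∈ t.path v m₁, κ u)
    (hpos : ∀ v, 0 < κ v)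
    : ∀ v, t.children v ≠ ∅ → ∀ c ∈ t.children v,
      (t.resistance κ c + 1) / t.resistance κ v = κ v / κ c := by
  intro v hv c hc
  obtain ⟨m, hm⟩ := t.exists_leaf (t.subtree v).card v le_rfl
  obtain ⟨mc, hmc⟩ := t.exists_leaf (t.subtree c).card c le_rfl
  have hSv := t.sum_sq_eq κ hrec hpath (t.subtree v).card v le_rfl m hm
  have hSc := t.sum_sq_eq κ hrec hpath (t.subtree c).card c le_rfl mc hmc
  have h2 := t.path_sum_step κ hc (Finset.mem_filter.1 hmc).1
  have h3 := hpath v mc (t.leaves_child_subset hc hmc) m hm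
  set Pc := ∑ u ∈ t.path c mc, κ u with hPc
  have hP : ∑ u ∈ t.path v m, κ u = Pc + κ v := by rw [← h3]; linarith
  have hPcpos : 0 < Pc :=
    Finset.sum_pos (fun u _ => hpos u)
      ⟨c, t.mem_path_self (Finset.mem_filter.1 hmc).1⟩
  clear_value Pc
  have hPne : Pc ≠ 0 := hPcpos.ne'
  have hκv := (hpos v).ne'
  have hκc := (hpos c).ne'
  rw [FinRootedTree.resistance, FinRootedTree.resistance, hSv, hSc, hP, sq, sq,
    mul_div_mul_left _ _ hκc, mul_div_mul_left _ _ hκv, sub_add_cancel,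
    add_div, div_self hκv, add_sub_cancel_right, div_div_div_comm,
    div_self hPne, one_div_div]
end

section
/- Effective spectral gap lemma: Let Π_A and Π_B be orthogonal projectors on a finite-dimensional Hilbert space, R_A = 2Π_A − I and R_B = 2Π_B − I the corresponding reflections, and for ε > 0 let P_ε denote the orthogonal projector onto the span of eigenvectors of R_B R_A with eigenvalues e^{2iθ} satisfying |θ| ≤ ε. If Π_A |ξ⟩ = 0, then ‖P_ε Π_B |ξ⟩‖ ≤ ε‖|ξ⟩‖. -/
/-!
Write `U = R_B R_A`, so that `U⁻¹ = R_A R_B`. The self-adjoint operator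
`2 - U - U⁻¹ = (1 - U)⋆ (1 - U)` has quadratic form `x ↦ ‖x - U⁻¹ x‖²` and acts as `4 sin² θ`
on the `e^{2iθ}`-eigenvectors of `U`, so `v = P_ε Π_B ξ` satisfies `‖v - U⁻¹ v‖ ≤ 2ε ‖v‖`.
On the other hand `R_A ξ = -ξ` gives `2 Π_B ξ = ξ - U ξ`, whence
`2 ‖v‖² = 2 re ⟪Π_B ξ, v⟫ = re ⟪ξ, v - U⁻¹ v⟫ ≤ 2ε ‖ξ‖ ‖v‖`.
-/

open Function Submodule
open scoped InnerProductSpace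

namespace LinearMap

variable {𝕜 E : Type*} [RCLike 𝕜] [NormedAddCommGroup E] [InnerProductSpace 𝕜 E]

section Spectral

variable [FiniteDimensional 𝕜 E] {T : E →ₗ[𝕜] E}

theorem IsSymmetric.re_inner_map_self_eq_sum (hT : T.IsSymmetric) (v : E) :
    RCLike.re ⟪v, T v⟫_𝕜 =
      ∑ i, hT.eigenvalues rfl i * ‖⟪hT.eigenvectorBasis rfl i, v⟫_𝕜‖ ^ 2 := by
  rw [← (hT.eigenvectorBasis rfl).sum_inner_mul_inner, map_sum]
  refine Finset.sum_congr rfl fun i _ => ?_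
  rw [← hT, hT.apply_eigenvectorBasis, inner_smul_left, RCLike.conj_ofReal, mul_left_comm,
    RCLike.re_ofReal_mul, inner_mul_symm_re_eq_norm, norm_mul, norm_inner_symm, sq]

theorem IsSymmetric.re_inner_map_self_le_of_mem_span_eigenvectors (hT : T.IsSymmetric)
    {c : ℝ} {v : E} (hv : v ∈ span 𝕜 {ψ | ∃ μ : ℝ, μ ≤ c ∧ T ψ = (μ : 𝕜) • ψ}) :
    RCLike.re ⟪v, T v⟫_𝕜 ≤ c * ‖v‖ ^ 2 := by
  set b := hT.eigenvectorBasis rfl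
  set μ := hT.eigenvalues rfl
  have hcoeff : ∀ i, c < μ i → ⟪b i, v⟫_𝕜 = 0 := by
    intro i hi
    induction hv using span_induction with
    | mem ψ hψ =>
      obtain ⟨ν, hν, hTψ⟩ := hψ
      have hne : (μ i : 𝕜) ≠ ν := by exact_mod_cast (hν.trans_lt hi).ne'
      exact hT.orthogonalFamily_eigenspaces hne
        ⟨b i, Module.End.mem_eigenspace_iff.2 (hT.apply_eigenvectorBasis rfl i)⟩
        ⟨ψ, Module.End.mem_eigenspace_iff.2 hTψ⟩
    | zero => exact inner_zero_right _
    | add x y _ _ hx hy => rw [inner_add_right, hx, hy, add_zero]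
    | smul a x _ hx => rw [inner_smul_right, hx, mul_zero]
  calc RCLike.re ⟪v, T v⟫_𝕜 = ∑ i, μ i * ‖⟪b i, v⟫_𝕜‖ ^ 2 := hT.re_inner_map_self_eq_sum v
    _ ≤ ∑ i, c * ‖⟪b i, v⟫_𝕜‖ ^ 2 := by
      refine Finset.sum_le_sum fun i _ => ?_
      rcases le_or_gt (μ i) c with hle | hlt
      · exact mul_le_mul_of_nonneg_right hle (sq_nonneg _)
      · simp [hcoeff i hlt]
    _ = c * ‖v‖ ^ 2 := by rw [← Finset.mul_sum, b.sum_sq_norm_inner_right]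

end Spectral

section Reflection

variable {P : E →ₗ[𝕜] E}

theorem IsSymmetric.two_smul_sub_id (hP : P.IsSymmetric) :
    (2 • P - LinearMap.id).IsSymmetric := by
  rw [two_smul]
  exact (hP.add hP).sub IsSymmetric.id

theorem involutive_two_smul_sub_id (hP : P ∘ₗ P = P) :
    Involutive (2 • P - LinearMap.id : E →ₗ[𝕜] E) := by
  intro x
  have hPx : P (P x) = P x := congr($hP x)
  simp only [two_smul, sub_apply, add_apply, id_apply, map_sub, map_add, hPx]
  abel

end Reflection

section PairOfReflections

variable {R S : E →ₗ[𝕜] E}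

theorem IsSymmetric.two_sub_comp_sub_comp (hR : R.IsSymmetric) (hS : S.IsSymmetric) :
    (2 - S ∘ₗ R - R ∘ₗ S).IsSymmetric := by
  intro x y
  simp only [sub_apply, Module.End.ofNat_apply, two_smul, comp_apply, inner_sub_left,
    inner_sub_right, inner_add_left, inner_add_right]
  rw [hS (R x), hR x, hR (S x), hS x]
  abel

theorem norm_sub_apply_apply_sq (hR : R.IsSymmetric) (hS : S.IsSymmetric)
    (hR' : Involutive R) (hS' : Involutive S) (x : E) :
    ‖x - R (S x)‖ ^ 2 = RCLike.re ⟪x, (2 - S ∘ₗ R - R ∘ₗ S) x⟫_𝕜 := by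
  have h₁ : ⟪R (S x), x⟫_𝕜 = ⟪x, S (R x)⟫_𝕜 := by rw [hR, hS]
  have h₂ : ⟪R (S x), R (S x)⟫_𝕜 = ⟪x, x⟫_𝕜 := by rw [hR, hR', hS, hS']
  rw [← inner_self_eq_norm_sq (𝕜 := 𝕜)]
  simp only [inner_sub_left, inner_sub_right, h₁, h₂, sub_apply, Module.End.ofNat_apply,
    two_smul, comp_apply, inner_add_right]
  congr 1
  abel

end PairOfReflections

end LinearMap

open Complex in
theorem Complex.two_sub_exp_sub_exp_neg (θ : ℝ) :
    2 - exp (2 * θ * I) - exp (-(2 * θ * I)) = ((4 * Real.sin θ ^ 2 : ℝ) : ℂ) := by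
  have h := two_cos (2 * θ)
  rw [cos_two_mul, cos_sq', neg_mul] at h
  push_cast
  linear_combination h

namespace LinearMap

open Complex

variable {E : Type*} [NormedAddCommGroup E] [InnerProductSpace ℂ E] {R S : E →ₗ[ℂ] E}

theorem two_sub_comp_sub_comp_apply_of_apply_eq_exp (hR : Involutive R) (hS : Involutive S)
    {θ : ℝ} {ψ : E} (hψ : (S ∘ₗ R) ψ = exp (2 * θ * I) • ψ) :
    (2 - S ∘ₗ R - R ∘ₗ S) ψ = ((4 * Real.sin θ ^ 2 : ℝ) : ℂ) • ψ := by
  rw [comp_apply] at hψ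
  have hRS : R (S ψ) = exp (-(2 * θ * I)) • ψ := by
    have h := congr(R (S $hψ))
    rw [hS, hR, map_smul, map_smul, eq_comm, ← eq_inv_smul_iff₀ (exp_ne_zero _)] at h
    rw [h, exp_neg]
  rw [← two_sub_exp_sub_exp_neg, sub_apply, sub_apply, Module.End.ofNat_apply, comp_apply,
    comp_apply, hψ, hRS]
  module

theorem span_eigenvectors_comp_le (hR : Involutive R) (hS : Involutive S) (ε : ℝ) :
    span ℂ {ψ | ∃ θ : ℝ, |θ| ≤ ε ∧ (S ∘ₗ R) ψ = exp (2 * θ * I) • ψ} ≤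
      span ℂ {ψ | ∃ μ : ℝ, μ ≤ 4 * ε ^ 2 ∧ (2 - S ∘ₗ R - R ∘ₗ S) ψ = (μ : ℂ) • ψ} := by
  refine span_mono ?_
  rintro ψ ⟨θ, hθ, hψ⟩
  refine ⟨4 * Real.sin θ ^ 2, ?_, two_sub_comp_sub_comp_apply_of_apply_eq_exp hR hS hψ⟩
  have := sq_le_sq.2 (hθ.trans (le_abs_self ε))
  linarith [Real.sin_sq_le_sq (x := θ)]

theorem norm_sub_apply_apply_le_of_mem_span_eigenvectors [FiniteDimensional ℂ E]
    (hR : R.IsSymmetric) (hS : S.IsSymmetric) (hR' : Involutive R) (hS' : Involutive S)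
    {ε : ℝ} (hε : 0 ≤ ε) {v : E}
    (hv : v ∈ span ℂ {ψ | ∃ θ : ℝ, |θ| ≤ ε ∧ (S ∘ₗ R) ψ = exp (2 * θ * I) • ψ}) :
    ‖v - R (S v)‖ ≤ 2 * ε * ‖v‖ := by
  refine (sq_le_sq₀ (norm_nonneg _) (by positivity)).1 ?_
  calc ‖v - R (S v)‖ ^ 2 = RCLike.re ⟪v, (2 - S ∘ₗ R - R ∘ₗ S) v⟫_ℂ :=
        norm_sub_apply_apply_sq hR hS hR' hS' v
    _ ≤ 4 * ε ^ 2 * ‖v‖ ^ 2 :=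
        (hR.two_sub_comp_sub_comp hS).re_inner_map_self_le_of_mem_span_eigenvectors
          (span_eigenvectors_comp_le hR' hS' ε hv)
    _ = (2 * ε * ‖v‖) ^ 2 := by ring

end LinearMap

open LinearMap

/-- Effective spectral gap lemma (Lee et al.): if `PA ξ = 0`, then the projection of
`PB ξ` onto the span of eigenvectors of `R_B R_A` with eigenphase at most `ε` has norm
at most `ε ‖ξ‖`. -/
theorem effective_spectral_gap {n : ℕ}
    (PA PB Pε : EuclideanSpace ℂ (Fin n) →ₗ[ℂ] EuclideanSpace ℂ (Fin n))
    (hAidem : PA ∘ₗ PA = PA)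
    (hAsym : ∀ x y, (inner ℂ (PA x) y : ℂ) = inner ℂ x (PA y))
    (hBidem : PB ∘ₗ PB = PB)
    (hBsym : ∀ x y, (inner ℂ (PB x) y : ℂ) = inner ℂ x (PB y))
    (RA RB : EuclideanSpace ℂ (Fin n) →ₗ[ℂ] EuclideanSpace ℂ (Fin n))
    (hRA : RA = 2 • PA - LinearMap.id)
    (hRB : RB = 2 • PB - LinearMap.id)
    (ε : ℝ) (hε : 0 < ε)
    (hPidem : Pε ∘ₗ Pε = Pε)
    (hPsym : ∀ x y, (inner ℂ (Pε x) y : ℂ) = inner ℂ x (Pε y))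
    (hPrange : LinearMap.range Pε =
      Submodule.span ℂ {ψ | ∃ θ : ℝ, |θ| ≤ ε ∧
        (RB ∘ₗ RA) ψ = Complex.exp (2 * θ * Complex.I) • ψ})
    (ξ : EuclideanSpace ℂ (Fin n)) (hξ : PA ξ = 0) :
    ‖Pε (PB ξ)‖ ≤ ε * ‖ξ‖ := by
  have hRAsymm : RA.IsSymmetric := hRA ▸ IsSymmetric.two_smul_sub_id hAsym
  have hRBsymm : RB.IsSymmetric := hRB ▸ IsSymmetric.two_smul_sub_id hBsym
  have hRAinv : Involutive RA := hRA ▸ involutive_two_smul_sub_id hAidem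
  have hRBinv : Involutive RB := hRB ▸ involutive_two_smul_sub_id hBidem
  set v := Pε (PB ξ) with hv_def
  have hgap : ‖v - RA (RB v)‖ ≤ 2 * ε * ‖v‖ :=
    norm_sub_apply_apply_le_of_mem_span_eigenvectors hRAsymm hRBsymm hRAinv hRBinv hε.le
      (hPrange ▸ mem_range_self Pε (PB ξ))
  have hPBξ : (2 : ℂ) • PB ξ = ξ - RB (RA ξ) := by
    simp only [hRA, hRB, LinearMap.sub_apply, LinearMap.smul_apply, id_apply, hξ, smul_zero,
      zero_sub, map_neg]
    module
  have hkey : 2 * ‖v‖ ^ 2 = RCLike.re ⟪ξ, v - RA (RB v)⟫_ℂ := by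
    have hvv : ⟪v, v⟫_ℂ = ⟪PB ξ, v⟫_ℂ := by rw [hv_def, hPsym, ← comp_apply Pε Pε, hPidem]
    rw [inner_sub_right, ← hRAsymm, ← hRBsymm, ← inner_sub_left, ← hPBξ, inner_smul_left,
      ← hvv, RCLike.conj_ofNat, RCLike.ofNat_mul_re, inner_self_eq_norm_sq]
  have hbound : 2 * ‖v‖ ^ 2 ≤ ‖ξ‖ * (2 * ε * ‖v‖) := hkey ▸ (RCLike.re_le_norm _).trans
    ((norm_inner_le_norm _ _).trans (mul_le_mul_of_nonneg_left hgap (norm_nonneg _)))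
  by_contra! h
  nlinarith [mul_nonneg hε.le (norm_nonneg ξ)]
end

section
/- Let T be a rooted tree, M ⊆ T the set of shallowest marked vertices, η > 0 a parameter, and for each marked m ∈ M define |φ_m⟩ = √η |r⟩ + ∑_{v ∈ P(r,m), v≠r} (−1)^{ℓ_v} |v⟩, where ℓ_v is the depth of v. Then |φ_m⟩ is orthogonal to |ψ_v(η)⟩ for every unmarked vertex v, where |ψ_r(η)⟩ ∝ |r⟩ + √η ∑_{c←r} |c⟩ and |ψ_v(η)⟩ ∝ |v⟩ + ∑_{c←v} |c⟩ for v ≠ r; consequently |φ_m⟩ is a fixed point (eigenvalue-1 eigenvector) of the walk operator R_B R_A(η). -/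
/-!
Write `φ = ∑_{i ≤ L} a i • |anc i⟩` with `a 0 = √η` and `a i = (-1) ^ depth (anc i)` for `i ≥ 1`.
Since every vertex has at most one parent, the support `{v} ∪ children v` of `ψ v` meets the path
only in `anc j` and `anc (j + 1)` when `v = anc j`, and not at all when `v` is off the path. So
`⟪ψ v, φ⟫` is a multiple of `a j + a (j + 1)` (of `a 0 + √η a 1` at the root) or is `0`, and both
vanish because the depth increases by one along the path. The walk operators reflect only in the
states `ψ v` of unmarked `v`, hence fix `φ`.
-/

open Finset

/-- `anc 0, …, anc L` is a simple downward path from `r`, in a forest given by `children` in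
which every vertex has at most one parent and `r` has none. -/
structure IsRootPath {V : Type*} (children : V → Finset V) (r : V) (L : ℕ) (anc : ℕ → V) :
    Prop where
  parent_unique : ∀ v₁ v₂ c, c ∈ children v₁ → c ∈ children v₂ → v₁ = v₂
  root_notMem_children : ∀ v, r ∉ children v
  anc_zero : anc 0 = r
  anc_succ_mem_children : ∀ i < L, anc (i + 1) ∈ children (anc i)
  injOn : ∀ i ≤ L, ∀ j ≤ L, anc i = anc j → i = j

noncomputable def pathVector {V : Type*} [DecidableEq V] (anc : ℕ → V) (L : ℕ) (a : ℕ → ℝ) :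
    EuclideanSpace ℝ V :=
  ∑ i ∈ Icc 0 L, a i • EuclideanSpace.single (anc i) (1 : ℝ)

section

variable {V : Type*} {children : V → Finset V} {r : V} {L : ℕ} {anc : ℕ → V}

namespace IsRootPath

theorem exists_eq_anc_of_anc_mem_children (hP : IsRootPath children r L anc) {i : ℕ} (hi : i ≤ L)
    {v : V} (h : anc i ∈ children v) : ∃ j < L, i = j + 1 ∧ v = anc j := by
  rcases i with _ | j
  · exact absurd (hP.anc_zero ▸ h) (hP.root_notMem_children v)
  · exact ⟨j, by omega, rfl, hP.parent_unique _ _ _ h (hP.anc_succ_mem_children j (by omega))⟩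

variable {f : V → ℝ}

theorem sum_children_anc (hP : IsRootPath children r L anc)
    (hf : ∀ w, (∀ i ≤ L, anc i ≠ w) → f w = 0) {j : ℕ} (hj : j < L) :
    ∑ c ∈ children (anc j), f c = f (anc (j + 1)) := by
  refine sum_eq_single_of_mem _ (hP.anc_succ_mem_children j hj) fun c hc hne => ?_
  by_cases hpath : ∀ i ≤ L, anc i ≠ c
  · exact hf c hpath
  · obtain ⟨i, hi, rfl⟩ : ∃ i ≤ L, anc i = c := by simpa using hpath
    obtain ⟨k, hk, rfl, hjk⟩ := hP.exists_eq_anc_of_anc_mem_children hi hc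
    exact absurd (by rw [hP.injOn j hj.le k hk.le hjk]) hne

theorem sum_children_eq_zero (hP : IsRootPath children r L anc)
    (hf : ∀ w, (∀ i ≤ L, anc i ≠ w) → f w = 0) {v : V} (hv : ∀ i ≤ L, anc i ≠ v) :
    ∑ c ∈ children v, f c = 0 := by
  refine sum_eq_zero fun c hc => ?_
  by_cases hpath : ∀ i ≤ L, anc i ≠ c
  · exact hf c hpath
  · obtain ⟨i, hi, rfl⟩ : ∃ i ≤ L, anc i = c := by simpa using hpath
    obtain ⟨k, hk, -, rfl⟩ := hP.exists_eq_anc_of_anc_mem_children hi hc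
    exact absurd rfl (hv k hk.le)

end IsRootPath

variable [DecidableEq V] (a : ℕ → ℝ)

theorem pathVector_apply (w : V) : pathVector anc L a w = ∑ i ∈ Icc 0 L with anc i = w, a i := by
  simp [pathVector, Pi.single_apply, sum_filter, eq_comm]

theorem pathVector_apply_anc (hinj : ∀ i ≤ L, ∀ j ≤ L, anc i = anc j → i = j) {j : ℕ}
    (hj : j ≤ L) : pathVector anc L a (anc j) = a j := by
  rw [pathVector_apply, sum_eq_single_of_mem j (by simpa using hj)]
  intro i hi hne
  obtain ⟨hi, hij⟩ := mem_filter.mp hi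
  exact absurd (hinj i (mem_Icc.mp hi).2 j hj hij) hne

theorem pathVector_apply_of_forall_ne {w : V} (hw : ∀ i ≤ L, anc i ≠ w) :
    pathVector anc L a w = 0 := by
  refine (pathVector_apply a w).trans (sum_eq_zero fun i hi => ?_)
  obtain ⟨hi, hiw⟩ := mem_filter.mp hi
  exact absurd hiw (hw i (mem_Icc.mp hi).2)

variable [Fintype V]

theorem inner_single_add_smul_sum_single (x : EuclideanSpace ℝ V) (v : V) (s : Finset V) (t : ℝ) :
    inner ℝ (EuclideanSpace.single v (1 : ℝ) + t • ∑ c ∈ s, EuclideanSpace.single c (1 : ℝ)) x =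
      x v + t * ∑ c ∈ s, x c := by
  simp [inner_add_left, real_inner_smul_left, sum_inner, EuclideanSpace.inner_single_left]

theorem IsRootPath.inner_pathVector_anc (hP : IsRootPath children r L anc) (t : ℝ) {j : ℕ}
    (hj : j < L) :
    inner ℝ (EuclideanSpace.single (anc j) (1 : ℝ) +
        t • ∑ c ∈ children (anc j), EuclideanSpace.single c (1 : ℝ)) (pathVector anc L a) =
      a j + t * a (j + 1) := by
  rw [inner_single_add_smul_sum_single,
    hP.sum_children_anc (fun _ => pathVector_apply_of_forall_ne a) hj,
    pathVector_apply_anc a hP.injOn hj.le, pathVector_apply_anc a hP.injOn hj]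

theorem IsRootPath.inner_pathVector_of_forall_ne (hP : IsRootPath children r L anc) (t : ℝ)
    {v : V} (hv : ∀ i ≤ L, anc i ≠ v) :
    inner ℝ (EuclideanSpace.single v (1 : ℝ) +
        t • ∑ c ∈ children v, EuclideanSpace.single c (1 : ℝ)) (pathVector anc L a) = 0 := by
  rw [inner_single_add_smul_sum_single,
    hP.sum_children_eq_zero (fun _ => pathVector_apply_of_forall_ne a) hv,
    pathVector_apply_of_forall_ne a hv, mul_zero, add_zero]

end

theorem sub_two_smul_sum_inner_smul_eq_self {E ι : Type*} [NormedAddCommGroup E]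
    [InnerProductSpace ℝ E] (s : Finset ι) (ψ : ι → E) {x : E}
    (hx : ∀ v ∈ s, inner ℝ (ψ v) x = 0) :
    x - (2 : ℝ) • ∑ v ∈ s, inner ℝ (ψ v) x • ψ v = x := by
  rw [sum_eq_zero fun v hv => by rw [hx v hv, zero_smul], smul_zero, sub_zero]

theorem path_state_fixed_point_general {V : Type*} [Fintype V] [DecidableEq V]
    (r : V) (children : V → Finset V) (depth : V → ℕ) (marked : V → Prop)
    [DecidablePred marked]
    -- tree structure hypotheses
    (hpar : ∀ v₁ v₂ c, c ∈ children v₁ → c ∈ children v₂ → v₁ = v₂)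
    (hroot : ∀ v, r ∉ children v)
    (hdepth : ∀ v c, c ∈ children v → depth c = depth v + 1)
    (hdepthr : depth r = 0)
    (η : ℝ)
    -- the path from the root to the marked vertex m
    (L : ℕ) (anc : ℕ → V) (m : V)
    (hanc0 : anc 0 = r) (hancL : anc L = m)
    (hchain : ∀ i < L, anc (i + 1) ∈ children (anc i))
    (hinj : ∀ i ≤ L, ∀ j ≤ L, anc i = anc j → i = j)
    (hm : marked m)
    -- the diffusion states
    (ψ : V → EuclideanSpace ℝ V)
    (hψr : ψ r = (Real.sqrt (1 + ((children r).card : ℝ) * η))⁻¹ •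
      (EuclideanSpace.single r (1 : ℝ) +
        Real.sqrt η • ∑ c ∈ children r, EuclideanSpace.single c (1 : ℝ)))
    (hψ : ∀ v, v ≠ r → ψ v = (Real.sqrt ((children v).card : ℝ))⁻¹ •
      (EuclideanSpace.single v (1 : ℝ) +
        ∑ c ∈ children v, EuclideanSpace.single c (1 : ℝ)))
    -- the path state
    (φ : EuclideanSpace ℝ V)
    (hφ : φ = Real.sqrt η • EuclideanSpace.single r (1 : ℝ) +
      ∑ i ∈ Finset.Icc 1 L,
        ((-1 : ℝ)) ^ depth (anc i) • EuclideanSpace.single (anc i) (1 : ℝ))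
    -- the walk operators: direct sums of the diffusion operators D_v over even (A)
    -- and odd (B) depth vertices, with D_v = I for marked v
    (RA RB : EuclideanSpace ℝ V →ₗ[ℝ] EuclideanSpace ℝ V)
    (hRA : ∀ x, RA x = x - (2 : ℝ) •
      ∑ v ∈ Finset.univ.filter (fun v => Even (depth v) ∧ ¬ marked v),
        (inner ℝ (ψ v) x : ℝ) • ψ v)
    (hRB : ∀ x, RB x = x - (2 : ℝ) •
      ∑ v ∈ Finset.univ.filter (fun v => ¬ Even (depth v) ∧ ¬ marked v),
        (inner ℝ (ψ v) x : ℝ) • ψ v) :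
    (∀ v, ¬ marked v → (inner ℝ (ψ v) φ : ℝ) = 0) ∧ RB (RA φ) = φ := by
  have hP : IsRootPath children r L anc := ⟨hpar, hroot, hanc0, hchain, hinj⟩
  set a : ℕ → ℝ := fun i => if i = 0 then √η else (-1) ^ depth (anc i)
  have hφa : φ = pathVector anc L a := by
    rw [hφ, pathVector, ← insert_Icc_add_one_left_eq_Icc L.zero_le, sum_insert (by simp)]
    refine congrArg₂ _ (by simp [a, hanc0]) (sum_congr rfl fun i hi => ?_)
    simp [a, Nat.pos_iff_ne_zero.mp (mem_Icc.mp hi).1]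
  have hortho : ∀ v, ¬ marked v → inner ℝ (ψ v) φ = 0 := by
    intro v hv
    rw [hφa]
    by_cases hoff : ∀ i ≤ L, anc i ≠ v
    · have hvr : v ≠ r := fun h => hoff 0 L.zero_le (hanc0.trans h.symm)
      rw [hψ v hvr, real_inner_smul_left, ← one_smul ℝ (∑ c ∈ children v, _),
        hP.inner_pathVector_of_forall_ne a 1 hoff, mul_zero]
    obtain ⟨j, hjL, rfl⟩ : ∃ j ≤ L, anc j = v := by simpa using hoff
    have hj : j < L := hjL.lt_of_ne (by rintro rfl; exact hv (hancL ▸ hm))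
    have hdepth_succ := hdepth _ _ (hchain j hj)
    rcases j with _ | j
    · rw [hanc0, hψr, real_inner_smul_left, ← hanc0, hP.inner_pathVector_anc a _ hj]
      simp [a, hdepth_succ, hanc0, hdepthr]
    · have hvr : anc (j + 1) ≠ r := fun h => by
        simpa using hinj _ hjL 0 L.zero_le (h.trans hanc0.symm)
      rw [hψ _ hvr, real_inner_smul_left, ← one_smul ℝ (∑ c ∈ children (anc (j + 1)), _),
        hP.inner_pathVector_anc a 1 hj]
      simp [a, hdepth_succ, pow_succ]
  refine ⟨hortho, ?_⟩
  rw [hRA, sub_two_smul_sum_inner_smul_eq_self _ _ fun v hv => hortho v (mem_filter.mp hv).2.2,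
    hRB, sub_two_smul_sum_inner_smul_eq_self _ _ fun v hv => hortho v (mem_filter.mp hv).2.2]

/-- The path state `|φ_m⟩ = √η |r⟩ + ∑_{v ∈ P(r,m), v ≠ r} (-1)^{ℓ_v} |v⟩` associated to a
shallowest marked vertex `m` is orthogonal to every diffusion state `|ψ_v(η)⟩` of an
unmarked vertex `v`, and is consequently a fixed point of the walk operator `R_B R_A(η)`. -/
theorem path_state_fixed_point {V : Type*} [Fintype V] [DecidableEq V]
    (r : V) (children : V → Finset V) (depth : V → ℕ) (marked : V → Prop)
    [DecidablePred marked]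
    -- tree structure hypotheses
    (hpar : ∀ v₁ v₂ c, c ∈ children v₁ → c ∈ children v₂ → v₁ = v₂)
    (hroot : ∀ v, r ∉ children v)
    (hdepth : ∀ v c, c ∈ children v → depth c = depth v + 1)
    (hdepthr : depth r = 0)
    (η : ℝ) (hη : 0 < η)
    -- the path from the root to the marked vertex m
    (L : ℕ) (hL : 0 < L) (anc : ℕ → V) (m : V)
    (hanc0 : anc 0 = r) (hancL : anc L = m)
    (hchain : ∀ i < L, anc (i + 1) ∈ children (anc i))
    (hinj : ∀ i ≤ L, ∀ j ≤ L, anc i = anc j → i = j)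
    (hm : marked m)
    (hshallow : ∀ i < L, ¬ marked (anc i))
    -- the diffusion states
    (ψ : V → EuclideanSpace ℝ V)
    (hψr : ψ r = (Real.sqrt (1 + ((children r).card : ℝ) * η))⁻¹ •
      (EuclideanSpace.single r (1 : ℝ) +
        Real.sqrt η • ∑ c ∈ children r, EuclideanSpace.single c (1 : ℝ)))
    (hψ : ∀ v, v ≠ r → ψ v = (Real.sqrt ((children v).card : ℝ))⁻¹ •
      (EuclideanSpace.single v (1 : ℝ) +
        ∑ c ∈ children v, EuclideanSpace.single c (1 : ℝ)))
    -- the path state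
    (φ : EuclideanSpace ℝ V)
    (hφ : φ = Real.sqrt η • EuclideanSpace.single r (1 : ℝ) +
      ∑ i ∈ Finset.Icc 1 L,
        ((-1 : ℝ)) ^ depth (anc i) • EuclideanSpace.single (anc i) (1 : ℝ))
    -- the walk operators: direct sums of the diffusion operators D_v over even (A)
    -- and odd (B) depth vertices, with D_v = I for marked v
    (RA RB : EuclideanSpace ℝ V →ₗ[ℝ] EuclideanSpace ℝ V)
    (hRA : ∀ x, RA x = x - (2 : ℝ) •
      ∑ v ∈ Finset.univ.filter (fun v => Even (depth v) ∧ ¬ marked v),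
        (inner ℝ (ψ v) x : ℝ) • ψ v)
    (hRB : ∀ x, RB x = x - (2 : ℝ) •
      ∑ v ∈ Finset.univ.filter (fun v => ¬ Even (depth v) ∧ ¬ marked v),
        (inner ℝ (ψ v) x : ℝ) • ψ v) :
    (∀ v, ¬ marked v → (inner ℝ (ψ v) φ : ℝ) = 0) ∧ RB (RA φ) = φ :=
  path_state_fixed_point_general r children depth marked hpar hroot hdepth hdepthr η L anc m hanc0
    hancL hchain hinj hm ψ hψr hψ φ hφ RA RB hRA hRB
end
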